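/- There exist a constant C > 0 and K₀ > 1 such that for all K ≥ K₀: | u⁰_{n*(K)} − 1/(1 − μ₁/λ₁) | ≤ C/K, where u⁰_n = 1 + ∑_{j=1}^{n−1} 1/(λ_j·π_j), and μ₁/λ₁ = μ̃(1/K)/λ̃(1/K). -/

import Mathlib

open Filter MeasureTheory

noncomputable section

/-- Birth rate `λ_n = n · λ̃(n/K)`. -/
def lamK (lam : ℝ → ℝ) (K : ℝ) (n : ℕ) : ℝ := (n : ℝ) * lam ((n : ℝ) / K)

/-- Death rate `μ_n = n · μ̃(n/K)`. -/
def muK (mu : ℝ → ℝ) (K : ℝ) (n : ℕ) : ℝ := (n : ℝ) * mu ((n : ℝ) / K)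

/-- The weights `π_n = (λ₁⋯λ_{n-1})/(μ₁⋯μ_n)` (so `π₁ = 1/μ₁`). -/
def pik (lam mu : ℝ → ℝ) (K : ℝ) (n : ℕ) : ℝ :=
  (∏ j ∈ Finset.Icc 1 (n - 1), lamK lam K j) / (∏ j ∈ Finset.Icc 1 n, muK mu K j)

/-- `H(x) = ∫_{x*}^x log (μ̃(s)/λ̃(s)) ds`. -/
def Hfun (lam mu : ℝ → ℝ) (xs : ℝ) (x : ℝ) : ℝ :=
  ∫ s in xs..x, Real.log (mu s / lam s)

/-- `u⁰_n = 1 + ∑_{j=1}^{n-1} 1/(λ_j π_j)`. -/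
def u0 (lam mu : ℝ → ℝ) (K : ℝ) (n : ℕ) : ℝ :=
  1 + ∑ j ∈ Finset.Icc 1 (n - 1), 1 / (lamK lam K j * pik lam mu K j)

/-- Standing assumptions on the rate functions. -/
structure SA (lam mu : ℝ → ℝ) (xs : ℝ) : Prop where
  lam_pos : ∀ x : ℝ, 0 ≤ x → 0 < lam x
  mu_pos : ∀ x : ℝ, 0 ≤ x → 0 < mu x
  lam_diff : DifferentiableOn ℝ lam (Set.Ici (0 : ℝ))
  mu_diff : DifferentiableOn ℝ mu (Set.Ici (0 : ℝ))
  lam_mono : MonotoneOn lam (Set.Ici (0 : ℝ))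
  mu_mono : MonotoneOn mu (Set.Ici (0 : ℝ))
  ratio_lim : Tendsto (fun x : ℝ => lam x / mu x) atTop (nhds 0)
  mu0_pos : 0 < mu 0
  mu0_lt_lam0 : mu 0 < lam 0
  xs_pos : 0 < xs
  lam_eq_mu_xs : lam xs = mu xs
  xs_unique : ∀ x : ℝ, 0 < x → lam x = mu x → x = xs
  mu_logderiv_bdd : ∃ M : ℝ, ∀ x : ℝ, 0 ≤ x → deriv mu x / mu x ≤ M
  logratio_mono : MonotoneOn (fun x : ℝ => Real.log (mu x / lam x)) (Set.Ici (0 : ℝ))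
  H_d1 : ∀ x : ℝ, 0 ≤ x → DifferentiableAt ℝ (Hfun lam mu xs) x
  H_d2 : ∀ x : ℝ, 0 ≤ x → DifferentiableAt ℝ (deriv (Hfun lam mu xs)) x
  H_d3 : ∀ x : ℝ, 0 ≤ x → DifferentiableAt ℝ (deriv (deriv (Hfun lam mu xs))) x
  H3_bdd : ∃ M : ℝ, ∀ x : ℝ, 0 ≤ x →
    (1 + x ^ 2) * |deriv (deriv (deriv (Hfun lam mu xs))) x| ≤ M

/-!
Write `ρ = μ̃ / λ̃`. Then `1 / (λ_j π_j) = ∏_{i ≤ j} ρ(i/K)`, so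
`u⁰_n = ∑_{j < n} ∏_{i ≤ j} ρ(i/K)`, while `1 / (1 - μ₁/λ₁) = ∑_j ρ(1/K)^j`. As `ρ` is
increasing and `L`-Lipschitz on `[0, x*]`, for `j ≤ m = ⌊x* K / 2⌋` the `j`-th terms differ by at
most `(L/K) j² q^(j-1)` with `q = ρ(x*/2) < 1`, and these errors sum to `O(1/K)`. Beyond `m` both
terms are at most `q^m`, exponentially small in `K`, so the remaining `n q^m` and the geometric
tail are `O(1/K)` too.
-/

open Finset

lemma abs_sum_range_sub_one_div_one_sub_le {f : ℕ → ℝ} {r : ℝ} (hr0 : 0 ≤ r) (hr1 : r < 1)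
    (hf : ∀ j, r ^ j ≤ f j) (n : ℕ) :
    |∑ j ∈ range n, f j - 1 / (1 - r)| ≤ ∑ j ∈ range n, (f j - r ^ j) + r ^ n / (1 - r) := by
  have hgeom : 1 / (1 - r) = ∑ j ∈ range n, r ^ j + r ^ n / (1 - r) := by
    have hne : 1 - r ≠ 0 := (sub_pos.2 hr1).ne'
    field_simp
    linear_combination -mul_neg_geom_sum r n
  have hsum : 0 ≤ ∑ j ∈ range n, (f j - r ^ j) := sum_nonneg fun j _ => sub_nonneg.2 (hf j)
  have htail : 0 ≤ r ^ n / (1 - r) := div_nonneg (pow_nonneg hr0 n) (sub_nonneg.2 hr1.le)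
  rw [hgeom, ← sub_sub, ← sum_sub_distrib]
  exact abs_sub_le_of_nonneg_of_le hsum (le_add_of_nonneg_right htail) htail
    (le_add_of_nonneg_left hsum)

lemma prod_Icc_sub_pow_le {a : ℕ → ℝ} {r c : ℝ} {j : ℕ} (hr : 0 ≤ r)
    (ha : ∀ i ∈ Icc 1 j, r ≤ a i ∧ a i ≤ c) :
    ∏ i ∈ Icc 1 j, a i - r ^ j ≤ (c - r) * j * c ^ (j - 1) := by
  rcases Nat.eq_zero_or_pos j with rfl | hj
  · simp
  have hrc : r ≤ c := (ha j (mem_Icc.2 ⟨hj, le_rfl⟩)).elim le_trans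
  have hprod : ∏ i ∈ Icc 1 j, a i ≤ c ^ j := by
    simpa using prod_le_prod (fun i hi => hr.trans (ha i hi).1) fun i hi => (ha i hi).2
  have hpow := abs_pow_sub_pow_le c r j
  rw [abs_of_nonneg (sub_nonneg.2 hrc), abs_of_nonneg (hr.trans hrc), abs_of_nonneg hr,
    max_eq_left hrc] at hpow
  linarith [le_abs_self (c ^ j - r ^ j)]

lemma prod_Icc_le_pow {a : ℕ → ℝ} {q : ℝ} {m j : ℕ} (hmono : Monotone a) (ha0 : 0 ≤ a 0)
    (hmj : m ≤ j) (ham : a m ≤ q) (haj : a j ≤ 1) : ∏ i ∈ Icc 1 j, a i ≤ q ^ m := by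
  have hnn : ∀ i, 0 ≤ a i := fun i => ha0.trans (hmono (Nat.zero_le i))
  rw [show Icc 1 j = Ioc 0 j from Icc_add_one_left_eq_Ioc 0 j,
    ← prod_Ioc_consecutive _ (Nat.zero_le m) hmj]
  have hhead : ∏ i ∈ Ioc 0 m, a i ≤ q ^ m := calc
    _ ≤ ∏ _i ∈ Ioc 0 m, q := prod_le_prod (fun i _ => hnn i) fun i hi =>
      (hmono (mem_Ioc.1 hi).2).trans ham
    _ = q ^ m := by simp
  have hrest : ∏ i ∈ Ioc m j, a i ≤ 1 :=
    prod_le_one (fun i _ => hnn i) fun i hi => (hmono (mem_Ioc.1 hi).2).trans haj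
  exact (mul_le_of_le_one_right (prod_nonneg fun i _ => hnn i) hrest).trans hhead

lemma summable_sq_mul_geometric {q : ℝ} (hq0 : 0 ≤ q) (hq1 : q < 1) :
    Summable fun k : ℕ => (k : ℝ) ^ 2 * q ^ k :=
  summable_pow_mul_geometric_of_norm_lt_one 2 (by rwa [Real.norm_of_nonneg hq0])

lemma sum_range_prod_Icc_sub_pow_le {a : ℕ → ℝ} {q δ : ℝ} {m : ℕ} (hmono : Monotone a)
    (ha0 : 0 ≤ a 0) (hq : 0 < q) (hq1 : q < 1) (hδ : 0 ≤ δ) (ham : a m ≤ q)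
    (hlip : ∀ j ∈ Icc 1 m, a j - a 1 ≤ δ * j) :
    ∑ j ∈ range (m + 1), (∏ i ∈ Icc 1 j, a i - a 1 ^ j) ≤
      δ / q * ∑' k : ℕ, (k : ℝ) ^ 2 * q ^ k := by
  calc ∑ j ∈ range (m + 1), (∏ i ∈ Icc 1 j, a i - a 1 ^ j)
      ≤ ∑ j ∈ range (m + 1), δ / q * ((j : ℝ) ^ 2 * q ^ j) := sum_le_sum fun j hj => ?_
    _ = δ / q * ∑ j ∈ range (m + 1), (j : ℝ) ^ 2 * q ^ j := (mul_sum ..).symm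
    _ ≤ _ := mul_le_mul_of_nonneg_left
        ((summable_sq_mul_geometric hq.le hq1).sum_le_tsum _ fun k _ => by positivity)
        (by positivity)
  rcases Nat.eq_zero_or_pos j with rfl | hj0
  · simp
  have hjm : j ≤ m := Nat.lt_succ_iff.1 (mem_range.1 hj)
  have haj : 0 ≤ a j := ha0.trans (hmono j.zero_le)
  have hterm := prod_Icc_sub_pow_le (c := a j) (ha0.trans (hmono zero_le_one)) fun i hi =>
    ⟨hmono (mem_Icc.1 hi).1, hmono (mem_Icc.1 hi).2⟩
  have hpow : (j : ℝ) ^ 2 * q ^ j = j * j * q ^ (j - 1) * q := by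
    rw [mul_assoc _ (q ^ _), ← pow_succ, Nat.sub_add_cancel hj0]
    ring
  calc _ ≤ (a j - a 1) * j * a j ^ (j - 1) := hterm
    _ ≤ δ * j * j * q ^ (j - 1) :=
        mul_le_mul (mul_le_mul_of_nonneg_right (hlip j (mem_Icc.2 ⟨hj0, hjm⟩)) j.cast_nonneg)
          (pow_le_pow_left₀ haj ((hmono hjm).trans ham) _) (pow_nonneg haj _) (by positivity)
    _ = δ / q * ((j : ℝ) ^ 2 * q ^ j) := by
        rw [hpow]
        field_simp

theorem abs_sum_range_prod_Icc_sub_le {a : ℕ → ℝ} {q δ : ℝ} {m n : ℕ} (hmono : Monotone a)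
    (ha0 : 0 ≤ a 0) (hq : 0 < q) (hq1 : q < 1) (hδ : 0 ≤ δ) (hm : 1 ≤ m) (hmn : m < n)
    (ham : a m ≤ q) (han : a n ≤ 1) (hlip : ∀ j ∈ Icc 1 m, a j - a 1 ≤ δ * j) :
    |∑ j ∈ range n, ∏ i ∈ Icc 1 j, a i - 1 / (1 - a 1)| ≤
      δ / q * ∑' k : ℕ, (k : ℝ) ^ 2 * q ^ k + n * q ^ m + q ^ m / (1 - q) := by
  have hr0 : 0 ≤ a 1 := ha0.trans (hmono zero_le_one)
  have hrq : a 1 ≤ q := (hmono hm).trans ham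
  have hpow (j : ℕ) : a 1 ^ j ≤ ∏ i ∈ Icc 1 j, a i := calc
    _ = ∏ _i ∈ Icc 1 j, a 1 := by simp
    _ ≤ _ := prod_le_prod (fun _ _ => hr0) fun i hi => hmono (mem_Icc.1 hi).1
  have hmid : ∑ j ∈ Ico (m + 1) n, (∏ i ∈ Icc 1 j, a i - a 1 ^ j) ≤ n * q ^ m := calc
    _ ≤ ∑ _j ∈ Ico (m + 1) n, q ^ m := sum_le_sum fun j hj =>
        (sub_le_self _ (pow_nonneg hr0 j)).trans <| prod_Icc_le_pow hmono ha0
          (by grind) ham ((hmono (mem_Ico.1 hj).2.le).trans han)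
    _ ≤ n * q ^ m := by
        rw [sum_const, Nat.card_Ico, nsmul_eq_mul]
        gcongr
        exact_mod_cast Nat.sub_le n (m + 1)
  have htail : a 1 ^ n / (1 - a 1) ≤ q ^ m / (1 - q) := by
    gcongr
    exact (pow_le_pow_left₀ hr0 hrq n).trans (pow_le_pow_of_le_one hq.le hq1.le hmn.le)
  refine (abs_sum_range_sub_one_div_one_sub_le hr0 (hrq.trans_lt hq1) hpow n).trans ?_
  rw [← sum_range_add_sum_Ico _ hmn]
  linarith [sum_range_prod_Icc_sub_pow_le hmono ha0 hq hq1 hδ ham hlip]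

lemma sq_mul_pow_floor_le {q x : ℝ} (hq : 0 < q) (hq1 : q < 1) (hx : 0 ≤ x) :
    x ^ 2 * q ^ ⌊x⌋₊ ≤ (∑' k : ℕ, (k : ℝ) ^ 2 * q ^ k) / q := by
  rw [le_div_iff₀ hq]
  calc x ^ 2 * q ^ ⌊x⌋₊ * q ≤ ((⌊x⌋₊ + 1 : ℕ) : ℝ) ^ 2 * q ^ (⌊x⌋₊ + 1) := by
        rw [pow_succ q, ← mul_assoc]
        gcongr
        exact_mod_cast (Nat.lt_floor_add_one x).le
    _ ≤ _ := (summable_sq_mul_geometric hq.le hq1).le_tsum _ fun k _ => by positivity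

lemma floor_mul_pow_floor_half_add_div_le {q y : ℝ} (hq : 0 < q) (hq1 : q < 1)
    (hy : 2 ≤ y) :
    ⌊y⌋₊ * q ^ ⌊y / 2⌋₊ + q ^ ⌊y / 2⌋₊ / (1 - q) ≤
      2 * (2 + 1 / (1 - q)) * (∑' k : ℕ, (k : ℝ) ^ 2 * q ^ k) / (q * y) := by
  set x := y / 2
  have hx : 1 ≤ x := by simp only [x]; linarith
  have hc : 0 ≤ 1 / (1 - q) := by
    have := sub_pos.2 hq1
    positivity
  have hpow := sq_mul_pow_floor_le hq hq1 (zero_le_one.trans hx)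
  have hfloor : (⌊y⌋₊ : ℝ) ≤ 2 * x := by
    simp only [x]
    linarith [Nat.floor_le (by linarith : 0 ≤ y)]
  calc ⌊y⌋₊ * q ^ ⌊x⌋₊ + q ^ ⌊x⌋₊ / (1 - q) = (⌊y⌋₊ + 1 / (1 - q)) * q ^ ⌊x⌋₊ := by ring
    _ ≤ (2 + 1 / (1 - q)) * x * q ^ ⌊x⌋₊ := by
        gcongr
        nlinarith
    _ = (2 + 1 / (1 - q)) * (x ^ 2 * q ^ ⌊x⌋₊) / x := by
        field_simp
    _ ≤ (2 + 1 / (1 - q)) * ((∑' k : ℕ, (k : ℝ) ^ 2 * q ^ k) / q) / x := by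
        gcongr
    _ = _ := by
        simp only [x]
        field_simp

lemma floor_half_lt_floor {y : ℝ} (hy : 2 ≤ y) : ⌊y / 2⌋₊ < ⌊y⌋₊ := by
  have h : ⌊y / 2⌋₊ + 1 ≤ ⌊y⌋₊ := by
    rw [← Nat.floor_add_one (by linarith)]
    exact Nat.floor_le_floor (by linarith)
  omega

def rateRatio (lam mu : ℝ → ℝ) (x : ℝ) : ℝ := mu x / lam x

lemma one_div_lamK_mul_pik (lam mu : ℝ → ℝ) (K : ℝ) {j : ℕ} (hj : 1 ≤ j) :
    1 / (lamK lam K j * pik lam mu K j) = ∏ i ∈ Icc 1 j, rateRatio lam mu (i / K) := by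
  obtain ⟨k, rfl⟩ := Nat.exists_eq_add_of_le' hj
  have hprod : lamK lam K (k + 1) * pik lam mu K (k + 1) =
      (∏ i ∈ Icc 1 (k + 1), lamK lam K i) / ∏ i ∈ Icc 1 (k + 1), muK mu K i := by
    rw [pik, prod_Icc_succ_top (by omega) (lamK lam K), Nat.add_sub_cancel]
    ring
  rw [hprod, one_div_div, ← prod_div_distrib]
  refine prod_congr rfl fun i hi => ?_
  have hi0 : (i : ℝ) ≠ 0 := Nat.cast_ne_zero.2 (by grind)
  rw [muK, lamK, mul_div_mul_left _ _ hi0, rateRatio]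

lemma u0_eq_sum_range (lam mu : ℝ → ℝ) (K : ℝ) {n : ℕ} (hn : 1 ≤ n) :
    u0 lam mu K n = ∑ j ∈ range n, ∏ i ∈ Icc 1 j, rateRatio lam mu (i / K) := by
  obtain ⟨k, rfl⟩ := Nat.exists_eq_add_of_le' hn
  rw [u0, Nat.add_sub_cancel, sum_range_succ', Icc_eq_empty_of_lt zero_lt_one, prod_empty,
    add_comm, ← Ico_add_one_right_eq_Icc, sum_Ico_eq_sum_range]
  refine congrArg (· + 1) (sum_congr rfl fun j _ => ?_)
  rw [add_comm 1 j, one_div_lamK_mul_pik lam mu K (Nat.le_add_left 1 j)]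

namespace SA

variable {lam mu : ℝ → ℝ} {xs : ℝ}

lemma rateRatio_pos (h : SA lam mu xs) {x : ℝ} (hx : 0 ≤ x) : 0 < rateRatio lam mu x :=
  div_pos (h.mu_pos x hx) (h.lam_pos x hx)

lemma rateRatio_le_rateRatio (h : SA lam mu xs) {x y : ℝ} (hx : 0 ≤ x) (hxy : x ≤ y) :
    rateRatio lam mu x ≤ rateRatio lam mu y :=
  (Real.log_le_log_iff (h.rateRatio_pos hx) (h.rateRatio_pos (hx.trans hxy))).1
    (h.logratio_mono hx (hx.trans hxy) hxy)

lemma rateRatio_le_one (h : SA lam mu xs) {x : ℝ} (hx0 : 0 ≤ x) (hx : x ≤ xs) :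
    rateRatio lam mu x ≤ 1 := by
  have hxs : rateRatio lam mu xs = 1 := by
    rw [rateRatio, ← h.lam_eq_mu_xs, div_self (h.lam_pos xs h.xs_pos.le).ne']
  exact hxs ▸ h.rateRatio_le_rateRatio hx0 hx

lemma rateRatio_lt_one (h : SA lam mu xs) {x : ℝ} (hx0 : 0 < x) (hx : x < xs) :
    rateRatio lam mu x < 1 := by
  refine (h.rateRatio_le_one hx0.le hx.le).lt_of_ne fun h1 => hx.ne (h.xs_unique x hx0 ?_)
  rw [rateRatio, div_eq_one_iff_eq (h.lam_pos x hx0.le).ne'] at h1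
  exact h1.symm

lemma exists_rateRatio_sub_le (h : SA lam mu xs) : ∃ L, 0 ≤ L ∧ ∀ a b, 0 ≤ a → a ≤ b → b ≤ xs →
    rateRatio lam mu b - rateRatio lam mu a ≤ L * (b - a) := by
  obtain ⟨M, hM⟩ := h.mu_logderiv_bdd
  set L := max M 0 * mu xs
  have hmu : ∀ a b, 0 ≤ a → a ≤ b → b ≤ xs → mu b - mu a ≤ L * (b - a) := by
    intro a b ha hab hb
    have hIcc : Set.Icc 0 xs ⊆ Set.Ici 0 := Set.Icc_subset_Ici_self
    refine (convex_Icc 0 xs).image_sub_le_mul_sub_of_deriv_le (h.mu_diff.continuousOn.mono hIcc)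
      (h.mu_diff.mono (interior_subset.trans hIcc)) (fun x hx => ?_) a ⟨ha, hab.trans hb⟩ b
      ⟨ha.trans hab, hb⟩ hab
    rw [interior_Icc] at hx
    have hmux := h.mu_pos x hx.1.le
    calc deriv mu x ≤ M * mu x := (div_le_iff₀ hmux).1 (hM x hx.1.le)
      _ ≤ max M 0 * mu x := by gcongr; exact le_max_left M 0
      _ ≤ L := mul_le_mul_of_nonneg_left (h.mu_mono hx.1.le h.xs_pos.le hx.2.le) (le_max_right M 0)
  have hlam0 := h.lam_pos 0 le_rfl
  have hL : 0 ≤ L := mul_nonneg (le_max_right M 0) (h.mu_pos xs h.xs_pos.le).le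
  refine ⟨L / lam 0, by positivity, fun a b ha hab hb => ?_⟩
  have hlama := h.lam_pos a ha
  have hmub := h.mu_pos b (ha.trans hab)
  calc rateRatio lam mu b - rateRatio lam mu a ≤ mu b / lam a - mu a / lam a :=
        sub_le_sub_right (div_le_div_of_nonneg_left hmub.le hlama
          (h.lam_mono ha (ha.trans hab) hab)) _
    _ = (mu b - mu a) / lam a := (sub_div ..).symm
    _ ≤ L * (b - a) / lam 0 := by
        gcongr
        · exact hmu a b ha hab hb
        · exact h.lam_mono Set.self_mem_Ici ha ha
    _ = L / lam 0 * (b - a) := by ring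

theorem abs_u0_sub_le (h : SA lam mu xs) {L q K : ℝ} (hL0 : 0 ≤ L)
    (hL : ∀ a b, 0 ≤ a → a ≤ b → b ≤ xs → rateRatio lam mu b - rateRatio lam mu a ≤ L * (b - a))
    (hq : rateRatio lam mu (xs / 2) ≤ q) (hq1 : q < 1) (hK : 2 ≤ xs * K) :
    |u0 lam mu K ⌊xs * K⌋₊ - 1 / (1 - muK mu K 1 / lamK lam K 1)| ≤
      (L + 2 * (2 + 1 / (1 - q)) / xs) * (∑' k : ℕ, (k : ℝ) ^ 2 * q ^ k) / q / K := by
  have hxs := h.xs_pos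
  have hK0 : 0 < K := pos_of_mul_pos_right (by linarith) hxs.le
  have hq0 : 0 < q := (h.rateRatio_pos (by positivity)).trans_le hq
  set m := ⌊xs * K / 2⌋₊
  have hm : 1 ≤ m := (Nat.one_le_floor_iff _).2 (by linarith)
  have hmn : m < ⌊xs * K⌋₊ := floor_half_lt_floor hK
  have hmK : (m : ℝ) / K ≤ xs / 2 := by
    rw [div_le_iff₀ hK0]
    linarith [Nat.floor_le (by linarith : 0 ≤ xs * K / 2)]
  have hnK : (⌊xs * K⌋₊ : ℝ) / K ≤ xs := by
    rw [div_le_iff₀ hK0]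
    exact Nat.floor_le (by linarith)
  have hmono : Monotone fun i : ℕ => rateRatio lam mu (i / K) := fun i j hij =>
    h.rateRatio_le_rateRatio (by positivity) (by gcongr)
  have hlip (j : ℕ) (hj : j ∈ Icc 1 m) :
      rateRatio lam mu (j / K) - rateRatio lam mu ((1 : ℕ) / K) ≤ L / K * j := by
    obtain ⟨hj1, hjm⟩ := mem_Icc.1 hj
    have hjK : (j : ℝ) / K ≤ xs :=
      (div_le_div_of_nonneg_right (Nat.cast_le.2 hjm : (j : ℝ) ≤ m) hK0.le).trans (by linarith)
    calc _ ≤ L * (j / K - (1 : ℕ) / K) := hL _ _ (by positivity) (by gcongr) hjK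
      _ = L / K * (j - 1) := by push_cast; ring
      _ ≤ L / K * j := by gcongr; linarith
  have hρ1 : muK mu K 1 / lamK lam K 1 = rateRatio lam mu ((1 : ℕ) / K) := by
    simp [muK, lamK, rateRatio]
  rw [u0_eq_sum_range lam mu K (hm.trans hmn.le), hρ1]
  refine (abs_sum_range_prod_Icc_sub_le (δ := L / K) hmono (h.rateRatio_pos (by positivity)).le
    hq0 hq1 (by positivity) hm hmn
    ((h.rateRatio_le_rateRatio (by positivity) hmK).trans hq)
    (h.rateRatio_le_one (by positivity) hnK) hlip).trans ?_
  have htail := floor_mul_pow_floor_half_add_div_le hq0 hq1 hK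
  have hC : (L + 2 * (2 + 1 / (1 - q)) / xs) * (∑' k : ℕ, (k : ℝ) ^ 2 * q ^ k) / q / K =
      L / K / q * (∑' k : ℕ, (k : ℝ) ^ 2 * q ^ k) +
        2 * (2 + 1 / (1 - q)) * (∑' k : ℕ, (k : ℝ) ^ 2 * q ^ k) / (q * (xs * K)) := by
    field_simp
  linarith

end SA

/-- `u⁰_{n*(K)} = 1/(1 - μ₁/λ₁) + O(1/K)`. -/
theorem stmt_18 (lam mu : ℝ → ℝ) (xs : ℝ) (hSA : SA lam mu xs) :
    ∃ C : ℝ, 0 < C ∧ ∃ K₀ : ℝ, 1 < K₀ ∧ ∀ K : ℝ, K₀ ≤ K →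
      |u0 lam mu K (Nat.floor (xs * K)) - 1 / (1 - muK mu K 1 / lamK lam K 1)| ≤ C / K := by
  obtain ⟨L, hL0, hL⟩ := hSA.exists_rateRatio_sub_le
  have hxs := hSA.xs_pos
  set q := rateRatio lam mu (xs / 2)
  have hq0 : 0 < q := hSA.rateRatio_pos (by positivity)
  have hq1 : q < 1 := hSA.rateRatio_lt_one (by positivity) (by linarith)
  have hq1' : 0 < 1 - q := sub_pos.2 hq1
  have hS : 0 < ∑' k : ℕ, (k : ℝ) ^ 2 * q ^ k :=
    (by positivity : (0 : ℝ) < ((1 : ℕ) : ℝ) ^ 2 * q ^ 1).trans_le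
      ((summable_sq_mul_geometric hq0.le hq1).le_tsum 1 fun _ _ => by positivity)
  refine ⟨_, by positivity, max 2 (2 / xs), lt_max_of_lt_left one_lt_two, fun K hK =>
    hSA.abs_u0_sub_le hL0 hL le_rfl hq1 ?_⟩
  have := (le_max_right 2 (2 / xs)).trans hK
  rwa [div_le_iff₀ hxs, mul_comm] at this
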